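/- arXiv:math-ph/0501039 — 2 statements merged into one kernel-verified Lean document; each statement's English description precedes it below -/
import Mathlib

section
/- Let V be a finite-dimensional real vector space, R ⊆ V a subspace, and Ω an antisymmetric bilinear form on R. Then L = {(x, η) ∈ V ⊕ V* : x ∈ R and η|_R = Ω(x, ·)} is a linear Dirac structure on V, with ρ(L) = R, and the kernel of Ω equals L ∩ V. -/
def canPairing {V : Type*} [AddCommGroup V] [Module ℝ V]
    (pq : (V × Module.Dual ℝ V) × (V × Module.Dual ℝ V)) : ℝ :=
  pq.1.2 pq.2.1 + pq.2.2 pq.1.1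

def IsIsotropic {V : Type*} [AddCommGroup V] [Module ℝ V]
    (L : Submodule ℝ (V × Module.Dual ℝ V)) : Prop :=
  ∀ x ∈ L, ∀ y ∈ L, canPairing (x, y) = 0

def IsDirac {V : Type*} [AddCommGroup V] [Module ℝ V]
    (L : Submodule ℝ (V × Module.Dual ℝ V)) : Prop :=
  IsIsotropic L ∧ ∀ L' : Submodule ℝ (V × Module.Dual ℝ V),
    IsIsotropic L' → L ≤ L' → L' = L

/-! Isotropy of `L` is the antisymmetry of `Ω`. For maximality it suffices that every `q = (x, η)`
pairing to zero with all of `L` lies in `L`: pairing with `(0, f)` for the functionals `f`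
vanishing on `R` forces `x ∈ R`, and pairing with `(y, μ)` for an extension `μ` of `Ω(y, ·)` gives
`η y = -Ω(y, x) = Ω(x, y)`. -/

section diracOfForm

variable {K V : Type*} [CommRing K] [AddCommGroup V] [Module K V]

def diracOfForm (R : Submodule K V) (Ω : R →ₗ[K] R →ₗ[K] K) :
    Submodule K (V × Module.Dual K V) where
  carrier := {q | ∃ hx : q.1 ∈ R, ∀ y : R, q.2 (y : V) = Ω ⟨q.1, hx⟩ y}
  add_mem' := by
    rintro ⟨a, α⟩ ⟨b, β⟩ ⟨ha, hα⟩ ⟨hb, hβ⟩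
    refine ⟨R.add_mem ha hb, fun y => ?_⟩
    change α y + β y = Ω (⟨a, ha⟩ + ⟨b, hb⟩) y
    rw [hα, hβ, map_add, LinearMap.add_apply]
  zero_mem' := ⟨R.zero_mem, fun y => by
    change 0 = Ω 0 y
    rw [map_zero, LinearMap.zero_apply]⟩
  smul_mem' := by
    rintro c ⟨a, α⟩ ⟨ha, hα⟩
    refine ⟨R.smul_mem c ha, fun y => ?_⟩
    change c • α y = Ω (c • ⟨a, ha⟩) y
    rw [hα, map_smul, LinearMap.smul_apply]

variable {R : Submodule K V} {Ω : R →ₗ[K] R →ₗ[K] K}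

theorem mem_diracOfForm {q : V × Module.Dual K V} :
    q ∈ diracOfForm R Ω ↔ ∃ hx : q.1 ∈ R, ∀ y : R, q.2 (y : V) = Ω ⟨q.1, hx⟩ y :=
  Iff.rfl

theorem mk_zero_mem_diracOfForm_iff (x : R) :
    ((x : V), (0 : Module.Dual K V)) ∈ diracOfForm R Ω ↔ ∀ y : R, Ω x y = 0 := by
  simp only [mem_diracOfForm, LinearMap.zero_apply, Subtype.coe_eta, SetLike.coe_mem,
    exists_true_left, eq_comm]

theorem zero_mk_mem_diracOfForm {f : Module.Dual K V} (hf : ∀ y : R, f y = 0) :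
    ((0 : V), f) ∈ diracOfForm R Ω :=
  ⟨R.zero_mem, fun y => by
    rw [hf, show (⟨0, R.zero_mem⟩ : R) = 0 from rfl, map_zero, LinearMap.zero_apply]⟩

end diracOfForm

section Field

variable {K V : Type*} [Field K] [AddCommGroup V] [Module K V]
  {R : Submodule K V} {Ω : R →ₗ[K] R →ₗ[K] K}

theorem exists_mem_diracOfForm (x : R) : ∃ η, ((x : V), η) ∈ diracOfForm R Ω := by
  obtain ⟨η, hη⟩ := LinearMap.exists_extend (Ω x)
  exact ⟨η, x.2, fun y => LinearMap.congr_fun hη y⟩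

theorem fst_image_diracOfForm :
    Prod.fst '' (diracOfForm R Ω : Set (V × Module.Dual K V)) = R := by
  ext x
  constructor
  · rintro ⟨q, ⟨hq, -⟩, rfl⟩
    exact hq
  · intro hx
    obtain ⟨η, hη⟩ := exists_mem_diracOfForm (Ω := Ω) ⟨x, hx⟩
    exact ⟨_, hη, rfl⟩

end Field

section Real

variable {V : Type*} [AddCommGroup V] [Module ℝ V] {R : Submodule ℝ V} {Ω : R →ₗ[ℝ] R →ₗ[ℝ] ℝ}

theorem isIsotropic_diracOfForm (hanti : ∀ a b : R, Ω a b = - Ω b a) :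
    IsIsotropic (diracOfForm R Ω) := by
  rintro ⟨a, α⟩ ⟨ha, hα⟩ ⟨b, β⟩ ⟨hb, hβ⟩
  simp only [canPairing, hα ⟨b, hb⟩, hβ ⟨a, ha⟩, hanti ⟨b, hb⟩ ⟨a, ha⟩, add_neg_cancel]

theorem fst_mem_of_forall_canPairing_eq_zero {q : V × Module.Dual ℝ V}
    (hq : ∀ p ∈ diracOfForm R Ω, canPairing (q, p) = 0) : q.1 ∈ R := by
  by_contra hx
  obtain ⟨f, hfR, hfx⟩ := LinearMap.exists_extend_of_notMem (0 : R →ₗ[ℝ] ℝ) hx 1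
  have hpair := hq _ (zero_mk_mem_diracOfForm (Ω := Ω) fun y => LinearMap.congr_fun hfR y)
  simp only [canPairing, map_zero, hfx, zero_add] at hpair
  exact one_ne_zero hpair

theorem mem_diracOfForm_of_forall_canPairing_eq_zero (hanti : ∀ a b : R, Ω a b = - Ω b a)
    {q : V × Module.Dual ℝ V} (hq : ∀ p ∈ diracOfForm R Ω, canPairing (q, p) = 0) :
    q ∈ diracOfForm R Ω := by
  have hxR := fst_mem_of_forall_canPairing_eq_zero hq
  refine ⟨hxR, fun y => ?_⟩
  obtain ⟨μ, hμ⟩ := exists_mem_diracOfForm (Ω := Ω) y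
  have hpair := hq _ hμ
  rw [canPairing, hμ.2 ⟨q.1, hxR⟩, hanti] at hpair
  linarith

theorem isDirac_diracOfForm (hanti : ∀ a b : R, Ω a b = - Ω b a) :
    IsDirac (diracOfForm R Ω) :=
  ⟨isIsotropic_diracOfForm hanti, fun _ hL' hle => le_antisymm
    (fun _ hq => mem_diracOfForm_of_forall_canPairing_eq_zero hanti
      fun _ hp => hL' _ hq _ (hle hp))
    hle⟩

end Real

theorem stmt6_general (V : Type*) [AddCommGroup V] [Module ℝ V]
    (R : Submodule ℝ V)
    (Ω : R →ₗ[ℝ] R →ₗ[ℝ] ℝ)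
    (hanti : ∀ a b : R, Ω a b = - Ω b a) :
    ∃ L : Submodule ℝ (V × Module.Dual ℝ V),
      (L : Set (V × Module.Dual ℝ V))
          = {q | ∃ hx : q.1 ∈ R, ∀ y : R, q.2 (y : V) = Ω ⟨q.1, hx⟩ y} ∧
      IsDirac L ∧
      (Prod.fst '' (L : Set (V × Module.Dual ℝ V)) = (R : Set V)) ∧
      (∀ x : R, (∀ y : R, Ω x y = 0) ↔ ((x : V), (0 : Module.Dual ℝ V)) ∈ L) :=
  ⟨diracOfForm R Ω, rfl, isDirac_diracOfForm hanti, fst_image_diracOfForm,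
    fun x => (mk_zero_mem_diracOfForm_iff x).symm⟩

/-- Given a subspace `R ⊆ V` and an antisymmetric bilinear form `Ω` on `R`,
the set `L = {(x,η) : x ∈ R, η|_R = Ω(x,·)}` is a linear Dirac structure on `V`, with
`ρ(L) = R` and `ker Ω = L ∩ V`. -/
theorem stmt6 (V : Type*) [AddCommGroup V] [Module ℝ V] [FiniteDimensional ℝ V]
    (R : Submodule ℝ V)
    (Ω : R →ₗ[ℝ] R →ₗ[ℝ] ℝ)
    (hanti : ∀ a b : R, Ω a b = - Ω b a) :
    ∃ L : Submodule ℝ (V × Module.Dual ℝ V),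
      (L : Set (V × Module.Dual ℝ V))
          = {q | ∃ hx : q.1 ∈ R, ∀ y : R, q.2 (y : V) = Ω ⟨q.1, hx⟩ y} ∧
      IsDirac L ∧
      (Prod.fst '' (L : Set (V × Module.Dual ℝ V)) = (R : Set V)) ∧
      (∀ x : R, (∀ y : R, Ω x y = 0) ↔ ((x : V), (0 : Module.Dual ℝ V)) ∈ L) :=
  stmt6_general V R Ω hanti
end

section
/- Let E be a Courant algebroid over a manifold M, with anchor ρ, bracket [·,·], pairing ⟨·,·⟩, and derivation 𝒟: C∞(M) → Γ(E) defined by ⟨𝒟f, e⟩ = ρ(e)f. Then for all e ∈ Γ(E) and f, g ∈ C∞(M): (1) [e, 𝒟f] = 𝒟⟨e, 𝒟f⟩; (2) [𝒟f, e] = 0; (3) ρ(𝒟f) = 0, equivalently ⟨𝒟f, 𝒟g⟩ = 0. -/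
/-!
Pairing with an arbitrary section `y`, invariance of the pairing and the fact that the anchor
is a Lie algebra morphism show that `⟨[e, 𝒟f], y⟩` and `⟨𝒟⟨e, 𝒟f⟩, y⟩` both equal
`ρ(y) ρ(e) f`, so nondegeneracy gives `[e, 𝒟f] = 𝒟⟨e, 𝒟f⟩`. As `⟨e, 𝒟f⟩ = ⟨𝒟f, e⟩`, this says
that `[e, 𝒟f]` alone already accounts for the symmetric part `[e, 𝒟f] + [𝒟f, e] = 𝒟⟨e, 𝒟f⟩`,
whence `[𝒟f, e] = 0`. Invariance then gives `ρ(𝒟f) ⟨e₁, e₂⟩ = 0`, and every function is such a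
pairing, so `ρ(𝒟f) = 0`; finally `⟨𝒟f, 𝒟g⟩ = ρ(𝒟g) f = 0`.
-/

namespace CourantAlgebroid

variable {R A E : Type*} [CommRing R] [CommRing A] [Algebra R A] [AddCommGroup E] [Module A E]
  {P : E →ₗ[A] E →ₗ[A] A} {br : E → E → E} {ρ : E →ₗ[A] Derivation R A A} {D : A → E}

theorem pair_D_right (hPsymm : ∀ x y : E, P x y = P y x)
    (hD : ∀ (f : A) (e : E), P (D f) e = ρ e f) (e : E) (f : A) :
    P e (D f) = ρ e f := by
  rw [hPsymm, hD]

theorem eq_of_forall_pair_eq (hPnondeg : ∀ x : E, (∀ y : E, P x y = 0) → x = 0) {x x' : E}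
    (h : ∀ y : E, P x y = P x' y) : x = x' :=
  sub_eq_zero.mp <| hPnondeg _ fun y => by rw [map_sub, LinearMap.sub_apply, h, sub_self]

theorem bracket_D_right (hPsymm : ∀ x y : E, P x y = P y x)
    (hPnondeg : ∀ x : E, (∀ y : E, P x y = 0) → x = 0)
    (hD : ∀ (f : A) (e : E), P (D f) e = ρ e f)
    (hinv : ∀ e₁ e₂ e₃ : E, ρ e₁ (P e₂ e₃) = P (br e₁ e₂) e₃ + P e₂ (br e₁ e₃))
    (hanch : ∀ e₁ e₂ : E, ρ (br e₁ e₂) = ⁅ρ e₁, ρ e₂⁆) (e : E) (f : A) :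
    br e (D f) = D (P e (D f)) := by
  refine eq_of_forall_pair_eq hPnondeg fun y => ?_
  have hleft : P (br e (D f)) y = ρ e (ρ y f) - ρ (br e y) f := by
    rw [eq_sub_of_add_eq (hinv e (D f) y).symm, hD, hD]
  rw [hleft, hanch, Derivation.commutator_apply, hD, pair_D_right hPsymm hD]
  ring

theorem bracket_D_left (hPsymm : ∀ x y : E, P x y = P y x)
    (hPnondeg : ∀ x : E, (∀ y : E, P x y = 0) → x = 0)
    (hD : ∀ (f : A) (e : E), P (D f) e = ρ e f)
    (hskew : ∀ e₁ e₂ : E, br e₁ e₂ + br e₂ e₁ = D (P e₁ e₂))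
    (hinv : ∀ e₁ e₂ e₃ : E, ρ e₁ (P e₂ e₃) = P (br e₁ e₂) e₃ + P e₂ (br e₁ e₃))
    (hanch : ∀ e₁ e₂ : E, ρ (br e₁ e₂) = ⁅ρ e₁, ρ e₂⁆) (f : A) (e : E) :
    br (D f) e = 0 := by
  have h := hskew e (D f)
  rw [bracket_D_right hPsymm hPnondeg hD hinv hanch] at h
  exact add_eq_left.mp h

theorem anchor_eq_zero_of_bracket_left_eq_zero
    (hinv : ∀ e₁ e₂ e₃ : E, ρ e₁ (P e₂ e₃) = P (br e₁ e₂) e₃ + P e₂ (br e₁ e₃))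
    (hgen : ∀ g : A, ∃ e₁ e₂ : E, g = P e₁ e₂) {x : E} (hx : ∀ e : E, br x e = 0) :
    ρ x = 0 := by
  ext g
  obtain ⟨e₁, e₂, rfl⟩ := hgen g
  simp [hinv, hx]

end CourantAlgebroid

open CourantAlgebroid in
theorem stmt16_general (A : Type*) [CommRing A] [Algebra ℝ A]
    (E : Type*) [AddCommGroup E] [Module A E] [Module ℝ E]
    (P : E →ₗ[A] E →ₗ[A] A)
    (br : E →ₗ[ℝ] E →ₗ[ℝ] E)
    (ρ : E →ₗ[A] Derivation ℝ A A)
    (D : A → E)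
    (hPsymm : ∀ x y : E, P x y = P y x)
    (hPnondeg : ∀ x : E, (∀ y : E, P x y = 0) → x = 0)
    (hD : ∀ (f : A) (e : E), P (D f) e = ρ e f)
    (hgen : ∀ g : A, ∃ e₁ e₂ : E, g = P e₁ e₂)
    (hskew : ∀ e₁ e₂ : E, br e₁ e₂ + br e₂ e₁ = D (P e₁ e₂))
    (hinv : ∀ e₁ e₂ e₃ : E, ρ e₁ (P e₂ e₃) = P (br e₁ e₂) e₃ + P e₂ (br e₁ e₃))
    (hanch : ∀ e₁ e₂ : E, ρ (br e₁ e₂) = ⁅ρ e₁, ρ e₂⁆) :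
    (∀ (e : E) (f : A), br e (D f) = D (P e (D f))) ∧
    (∀ (f : A) (e : E), br (D f) e = 0) ∧
    (∀ f : A, ρ (D f) = 0) ∧
    (∀ f g : A, P (D f) (D g) = 0) := by
  have hleft := bracket_D_left hPsymm hPnondeg hD hskew hinv hanch
  have hanchor : ∀ f : A, ρ (D f) = 0 := fun f =>
    anchor_eq_zero_of_bracket_left_eq_zero hinv hgen (hleft f)
  refine ⟨bracket_D_right hPsymm hPnondeg hD hinv hanch, hleft, hanchor, fun f g => ?_⟩
  rw [hD, hanchor, Derivation.zero_apply]

/-- In an (abstract) Courant algebroid — sections `E` a module over the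
algebra of functions `A`, with symmetric nondegenerate `A`-valued pairing `P`, ℝ-bilinear
Courant bracket `br`, anchor `ρ` landing in derivations of `A`, and `D : A → E` defined by
`P (D f) e = ρ e f` — one has `[e, D f] = D ⟨e, D f⟩`, `[D f, e] = 0`, `ρ (D f) = 0`
and `⟨D f, D g⟩ = 0`. -/
theorem stmt16 (A : Type*) [CommRing A] [Algebra ℝ A]
    (E : Type*) [AddCommGroup E] [Module A E] [Module ℝ E] [IsScalarTower ℝ A E]
    (P : E →ₗ[A] E →ₗ[A] A)
    (br : E →ₗ[ℝ] E →ₗ[ℝ] E)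
    (ρ : E →ₗ[A] Derivation ℝ A A)
    (D : A → E)
    (hPsymm : ∀ x y : E, P x y = P y x)
    (hPnondeg : ∀ x : E, (∀ y : E, P x y = 0) → x = 0)
    (hD : ∀ (f : A) (e : E), P (D f) e = ρ e f)
    (hgen : ∀ g : A, ∃ e₁ e₂ : E, g = P e₁ e₂)
    (hjac : ∀ e₁ e₂ e₃ : E, br e₁ (br e₂ e₃) = br (br e₁ e₂) e₃ + br e₂ (br e₁ e₃))
    (hskew : ∀ e₁ e₂ : E, br e₁ e₂ + br e₂ e₁ = D (P e₁ e₂))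
    (hinv : ∀ e₁ e₂ e₃ : E, ρ e₁ (P e₂ e₃) = P (br e₁ e₂) e₃ + P e₂ (br e₁ e₃))
    (hanch : ∀ e₁ e₂ : E, ρ (br e₁ e₂) = ⁅ρ e₁, ρ e₂⁆) :
    (∀ (e : E) (f : A), br e (D f) = D (P e (D f))) ∧
    (∀ (f : A) (e : E), br (D f) e = 0) ∧
    (∀ f : A, ρ (D f) = 0) ∧
    (∀ f g : A, P (D f) (D g) = 0) :=
  stmt16_general A E P br ρ D hPsymm hPnondeg hD hgen hskew hinv hanch
end
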